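/- Let p ∈ [1,∞), and suppose there exist a continuously differentiable V : D → [0,∞) and constants γ, δ ≥ 0, c > 0 such that for every x, u, w ∈ D one has ∇V(x)·f(u, x, w) ≤ −c|h(x)|^p + γ^p c|h(u)|^p + δ^p c|h(w)|^p. Then for every ξ ∈ D, all continuous inputs u, w : [0,∞) → D, and every solution x of the single-component system with inputs u, w and x(0) = ξ, one has ‖h∘x‖_{[0,t],p} ≤ γ‖h∘u‖_{[0,t],p} + δ‖h∘w‖_{[0,t],p} + (c^{−1}V(ξ))^{1/p} for all t ≥ 0. -/

import Mathlib

/-!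
Along a trajectory, the dissipation inequality bounds the derivative of `V ∘ x` by the supply
rate `-c‖h(x)‖^p + γ^p c‖h(u)‖^p + δ^p c‖h(w)‖^p`. Integrating over `[0, t]` and using
`V(x t) ≥ 0` bounds `∫‖h(x)‖^p` by `γ^p ∫‖h(u)‖^p + δ^p ∫‖h(w)‖^p + c⁻¹ V(ξ)`; taking `p`-th roots,
which are subadditive for `p ≥ 1`, gives the estimate.
-/

/-- The `L^p` norm of a signal `y` on the interval `[0, t]`:
`‖y‖_{[0,t],p} = (∫_0^t |y(s)|^p ds)^{1/p}`. -/
noncomputable def lpNorm {m : ℕ} (p : ℝ) (y : ℝ → EuclideanSpace ℝ (Fin m)) (t : ℝ) : ℝ :=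
  (∫ s in (0:ℝ)..t, ‖y s‖ ^ p) ^ (1 / p)

open Set MeasureTheory intervalIntegral

/-- The derivative of `V ∘ x` need not be integrable: a pointwise bound by an integrable function
suffices. -/
theorem sub_le_integral_of_fderiv_comp_le {E : Type*} [NormedAddCommGroup E] [NormedSpace ℝ E]
    {V : E → ℝ} {D : Set E} (hD : IsOpen D) (hV : DifferentiableOn ℝ V D)
    {x x' : ℝ → E} {φ : ℝ → ℝ} {a b : ℝ} (hab : a ≤ b) (hxD : ∀ s ∈ Icc a b, x s ∈ D)
    (hx : ∀ s ∈ Icc a b, HasDerivAt x (x' s) s) (hφ : IntervalIntegrable φ volume a b)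
    (hle : ∀ s ∈ Ioo a b, fderiv ℝ V (x s) (x' s) ≤ φ s) :
    V (x b) - V (x a) ≤ ∫ s in a..b, φ s := by
  have hVx : ∀ s ∈ Icc a b, HasDerivAt (fun s => V (x s)) (fderiv ℝ V (x s) (x' s)) s :=
    fun s hs => ((hV.differentiableAt (hD.mem_nhds (hxD s hs))).hasFDerivAt).comp_hasDerivAt s
      (hx s hs)
  exact sub_le_integral_of_hasDeriv_right_of_le hab
    (fun s hs => (hVx s hs).continuousAt.continuousWithinAt)
    (fun s hs => (hVx s (Ioo_subset_Icc_self hs)).hasDerivWithinAt)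
    ((intervalIntegrable_iff_integrableOn_Icc_of_le hab).1 hφ) hle

theorem intervalIntegrable_rpow_norm_comp {E F : Type*} [TopologicalSpace E] [NormedAddCommGroup F]
    {h : E → F} {D : Set E} {y : ℝ → E} {p t : ℝ} (hh : ContinuousOn h D)
    (hy : ContinuousOn y (Ici 0)) (hyD : ∀ s ≥ 0, y s ∈ D) (hp : 0 ≤ p) (ht : 0 ≤ t) :
    IntervalIntegrable (fun s => ‖h (y s)‖ ^ p) volume 0 t :=
  ((((hh.comp hy hyD).norm).rpow_const fun _ _ => Or.inr hp).mono
    (by rw [uIcc_of_le ht]; exact fun s hs => hs.1)).intervalIntegrable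

theorem Real.rpow_one_div_le_of_le_rpow_mul_add {p A B C E γ δ : ℝ} (hp : 1 ≤ p) (hA : 0 ≤ A)
    (hB : 0 ≤ B) (hC : 0 ≤ C) (hE : 0 ≤ E) (hγ : 0 ≤ γ) (hδ : 0 ≤ δ)
    (hle : A ≤ γ ^ p * B + δ ^ p * C + E) :
    A ^ (1 / p) ≤ γ * B ^ (1 / p) + δ * C ^ (1 / p) + E ^ (1 / p) := by
  have hp0 : p ≠ 0 := by positivity
  have hq0 : 0 ≤ 1 / p := by positivity
  have hq1 : 1 / p ≤ 1 := (div_le_one (by positivity)).2 hp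
  have hγB : 0 ≤ γ ^ p * B := by positivity
  have hδC : 0 ≤ δ ^ p * C := by positivity
  calc A ^ (1 / p) ≤ (γ ^ p * B + δ ^ p * C + E) ^ (1 / p) := rpow_le_rpow hA hle hq0
    _ ≤ (γ ^ p * B + δ ^ p * C) ^ (1 / p) + E ^ (1 / p) :=
      rpow_add_le_add_rpow (by positivity) hE hq0 hq1
    _ ≤ (γ ^ p * B) ^ (1 / p) + (δ ^ p * C) ^ (1 / p) + E ^ (1 / p) := by
      gcongr; exact rpow_add_le_add_rpow hγB hδC hq0 hq1
    _ = γ * B ^ (1 / p) + δ * C ^ (1 / p) + E ^ (1 / p) := by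
      rw [mul_rpow (by positivity) hB, mul_rpow (by positivity) hC, one_div,
        rpow_rpow_inv hγ hp0, rpow_rpow_inv hδ hp0]

theorem trajectory_estimate_from_lyapunov {k m : ℕ}
    (D : Set (EuclideanSpace ℝ (Fin k))) (hDopen : IsOpen D)
    (h : EuclideanSpace ℝ (Fin k) → EuclideanSpace ℝ (Fin m))
    (hhcont : ContinuousOn h D)
    (f : EuclideanSpace ℝ (Fin k) → EuclideanSpace ℝ (Fin k) → EuclideanSpace ℝ (Fin k) →
      EuclideanSpace ℝ (Fin k))
    (p : ℝ) (hp : 1 ≤ p)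
    (V : EuclideanSpace ℝ (Fin k) → ℝ) (hV : ContDiffOn ℝ 1 V D) (hV0 : ∀ x ∈ D, 0 ≤ V x)
    (γ δ c : ℝ) (hγ : 0 ≤ γ) (hδ : 0 ≤ δ) (hc : 0 < c)
    -- the dissipation inequality (3.3): ∇V(x)·f(u,x,w) ≤ −c|h(x)|^p + γ^p c|h(u)|^p + δ^p c|h(w)|^p
    (Hdiss : ∀ x ∈ D, ∀ u ∈ D, ∀ w ∈ D,
      fderiv ℝ V x (f u x w) ≤
        -c * ‖h x‖ ^ p + γ ^ p * c * ‖h u‖ ^ p + δ ^ p * c * ‖h w‖ ^ p) :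
    -- conclusion: the trajectory estimate (3.2)
    ∀ ξ ∈ D, ∀ u w : ℝ → EuclideanSpace ℝ (Fin k),
      ContinuousOn u (Set.Ici 0) → ContinuousOn w (Set.Ici 0) →
      (∀ t ≥ (0:ℝ), u t ∈ D) → (∀ t ≥ (0:ℝ), w t ∈ D) →
      ∀ x : ℝ → EuclideanSpace ℝ (Fin k),
        (∀ t ≥ (0:ℝ), x t ∈ D) → x 0 = ξ →
        (∀ t ≥ (0:ℝ), HasDerivAt x (f (u t) (x t) (w t)) t) →
        ∀ t ≥ (0:ℝ),
          lpNorm p (fun s => h (x s)) t ≤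
            γ * lpNorm p (fun s => h (u s)) t + δ * lpNorm p (fun s => h (w s)) t +
            (c⁻¹ * V ξ) ^ (1 / p) := by
  intro ξ hξ u w hu hw huD hwD x hxD hx0 hx t ht
  have hp0 : 0 ≤ p := by linarith
  have hxu := intervalIntegrable_rpow_norm_comp hhcont
    (fun s hs => (hx s hs).continuousAt.continuousWithinAt) hxD hp0 ht
  have huu := intervalIntegrable_rpow_norm_comp hhcont hu huD hp0 ht
  have hwu := intervalIntegrable_rpow_norm_comp hhcont hw hwD hp0 ht
  set A := ∫ s in (0:ℝ)..t, ‖h (x s)‖ ^ p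
  set B := ∫ s in (0:ℝ)..t, ‖h (u s)‖ ^ p
  set C := ∫ s in (0:ℝ)..t, ‖h (w s)‖ ^ p
  have hdecrease : V (x t) - V ξ ≤ -c * A + γ ^ p * c * B + δ ^ p * c * C := by
    rw [← hx0]
    calc V (x t) - V (x 0)
        ≤ ∫ s in (0:ℝ)..t,
            (-c * ‖h (x s)‖ ^ p + γ ^ p * c * ‖h (u s)‖ ^ p + δ ^ p * c * ‖h (w s)‖ ^ p) :=
          sub_le_integral_of_fderiv_comp_le hDopen (hV.differentiableOn one_ne_zero) ht
            (fun s hs => hxD s hs.1) (fun s hs => hx s hs.1)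
            (((hxu.const_mul _).add (huu.const_mul _)).add (hwu.const_mul _))
            (fun s hs => Hdiss _ (hxD s hs.1.le) _ (huD s hs.1.le) _ (hwD s hs.1.le))
      _ = -c * A + γ ^ p * c * B + δ ^ p * c * C := by
        rw [integral_add ((hxu.const_mul _).add (huu.const_mul _)) (hwu.const_mul _),
          integral_add (hxu.const_mul _) (huu.const_mul _),
          intervalIntegral.integral_const_mul, intervalIntegral.integral_const_mul,
          intervalIntegral.integral_const_mul]
  have hA : A ≤ γ ^ p * B + δ ^ p * C + c⁻¹ * V ξ := by
    refine le_of_mul_le_mul_left ?_ hc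
    rw [mul_add, mul_add, mul_inv_cancel_left₀ hc.ne']
    linarith [hV0 (x t) (hxD t ht)]
  have hnonneg {y : ℝ → EuclideanSpace ℝ (Fin m)} : 0 ≤ ∫ s in (0:ℝ)..t, ‖y s‖ ^ p :=
    integral_nonneg ht fun s _ => by positivity
  exact Real.rpow_one_div_le_of_le_rpow_mul_add hp hnonneg hnonneg hnonneg
    (mul_nonneg (inv_nonneg.2 hc.le) (hV0 ξ hξ)) hγ hδ hA
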